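/- Let j_m ∈ ℕ and set θ_j = 2^{−max(j−j_m,0)}. Let γ > 0 and 0 < β₁ ≤ β₂. Then there exist constants c > 0 and g* > 0, depending only on γ, β₁, β₂, such that the following holds for every 0 < g_0 ≤ g*: if (g_j)_{j≥0} is a positive sequence satisfying β₁ θ_j² g_j² ≤ g_j − g_{j+1} ≤ β₂ θ_j² g_j² for all j, and (ε_j)_{j≥0} is a sequence satisfying ε_0 = (1/5) g_0^{1/2} and ε_{j+1} ≥ ε̄_j − γ θ_j² ε̄_j² for all j, where ε̄_j = min(ε_j, (1/5) g_j^{1/2}), then ε_j ≥ c·g_j for every j ∈ ℕ. -/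

import Mathlib

/-!
With `c = β₁ / γ` the sequence `c g_j` is a subsolution of the recursion for `ε`:
`c g_{j+1} ≤ c g_j - cβ₁θ_j² g_j² ≤ c g_j - γθ_j² (c g_j)²`. Since `g` decreases, choosing
`√g* ≤ 1 / (5c)` gives `c g_j ≤ √g_j / 5`, and `√g* ≤ 5 / (2γ)` keeps every `ε̄_j` in the range
`[0, 1 / (2γ)]` where `x ↦ x - γθ_j² x²` is increasing. Induction then gives `c g_j ≤ ε̄_j ≤ ε_j`.
-/

/-- `θ_j = 2^{-(j - j_m)_+}`. -/
noncomputable def theta (jm j : ℕ) : ℝ := ((2 : ℝ) ^ (j - jm))⁻¹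

lemma theta_pos (jm j : ℕ) : 0 < theta jm j := by
  unfold theta
  positivity

lemma theta_sq_le_one (jm j : ℕ) : theta jm j ^ 2 ≤ 1 :=
  pow_le_one₀ (theta_pos jm j).le (inv_le_one_of_one_le₀ (one_le_pow₀ one_le_two))

lemma sub_mul_sq_le_sub_mul_sq {a x y : ℝ} (hxy : x ≤ y) (h : a * (x + y) ≤ 1) :
    x - a * x ^ 2 ≤ y - a * y ^ 2 := by
  nlinarith [mul_nonneg (sub_nonneg.2 hxy) (sub_nonneg.2 h)]

lemma mul_le_mul_sqrt_of_sqrt_le {c s k x : ℝ} (hc : 0 ≤ c) (hx : 0 ≤ x) (hxs : √x ≤ s)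
    (hcs : c * s ≤ k) : c * x ≤ k * √x :=
  calc c * x = c * √x * √x := by rw [mul_assoc, Real.mul_self_sqrt hx]
    _ ≤ c * s * √x := by gcongr
    _ ≤ k * √x := by gcongr

/-- One step of the comparison: `t` stands for `θ_j²`, `b` for `ε̄_j` and `e'` for `ε_{j+1}`. -/
lemma comparison_step {γ β₁ c t g g' b e' : ℝ} (hγ : 0 ≤ γ) (hc : 0 ≤ c) (hcγ : γ * c ≤ β₁)
    (ht : 0 ≤ t) (ht1 : t ≤ 1) (hg : 0 ≤ g) (hgg' : β₁ * t * g ^ 2 ≤ g - g')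
    (hcb : c * g ≤ b) (hb : 2 * γ * b ≤ 1) (he' : b - γ * t * b ^ 2 ≤ e') :
    c * g' ≤ e' := by
  have hcg : 0 ≤ c * g := mul_nonneg hc hg
  have hmono : γ * t * (c * g + b) ≤ 1 := by
    nlinarith [mul_nonneg (mul_nonneg hγ ht) (sub_nonneg.2 hcb),
      mul_nonneg (mul_nonneg hγ (hcg.trans hcb)) (sub_nonneg.2 ht1)]
  calc c * g' ≤ c * g - c * (β₁ * t * g ^ 2) := by nlinarith
    _ ≤ c * g - γ * t * (c * g) ^ 2 := by
        nlinarith [mul_nonneg (mul_nonneg (mul_nonneg hc ht) (sq_nonneg g)) (sub_nonneg.2 hcγ)]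
    _ ≤ b - γ * t * b ^ 2 := sub_mul_sq_le_sub_mul_sq hcb hmono
    _ ≤ e' := he'

theorem stmt12_general (γ β₁ β₂ : ℝ) (hγ : 0 < γ) (hβ₁ : 0 < β₁) :
    ∃ c gs : ℝ, 0 < c ∧ 0 < gs ∧
      ∀ (jm : ℕ) (g ε : ℕ → ℝ),
        (∀ j, 0 < g j) → g 0 ≤ gs →
        (∀ j, β₁ * theta jm j ^ 2 * g j ^ 2 ≤ g j - g (j + 1) ∧
              g j - g (j + 1) ≤ β₂ * theta jm j ^ 2 * g j ^ 2) →
        ε 0 = (1 / 5) * Real.sqrt (g 0) →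
        (∀ j, min (ε j) ((1 / 5) * Real.sqrt (g j)) -
              γ * theta jm j ^ 2 * (min (ε j) ((1 / 5) * Real.sqrt (g j))) ^ 2
            ≤ ε (j + 1)) →
        ∀ j, c * g j ≤ ε j := by
  set c := β₁ / γ
  set s := min (1 / (5 * c)) (5 / (2 * γ))
  have hc : 0 < c := by positivity
  have hs : 0 < s := lt_min (by positivity) (by positivity)
  have hcγ : γ * c = β₁ := mul_div_cancel₀ β₁ hγ.ne'
  have hcs : c * s ≤ 1 / 5 := by
    calc c * s ≤ c * (1 / (5 * c)) := by gcongr; exact min_le_left _ _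
      _ = 1 / 5 := by field_simp
  have hγs : 2 * γ * (1 / 5 * s) ≤ 1 := by
    calc 2 * γ * (1 / 5 * s) ≤ 2 * γ * (1 / 5 * (5 / (2 * γ))) := by gcongr; exact min_le_right _ _
      _ = 1 := by field_simp
  refine ⟨c, s ^ 2, hc, by positivity, fun jm g ε hg hg0 hgg hε0 hε j => ?_⟩
  have hanti : Antitone g := antitone_nat_of_succ_le fun j => by
    nlinarith [(hgg j).1, mul_pos (mul_pos hβ₁ (pow_pos (theta_pos jm j) 2)) (pow_pos (hg j) 2)]
  have hsqrt (j : ℕ) : √(g j) ≤ s := Real.sqrt_le_iff.2 ⟨hs.le, (hanti (Nat.zero_le j)).trans hg0⟩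
  have hbar (j : ℕ) : c * g j ≤ 1 / 5 * √(g j) :=
    mul_le_mul_sqrt_of_sqrt_le hc.le (hg j).le (hsqrt j) hcs
  have key (j : ℕ) : c * g j ≤ min (ε j) (1 / 5 * √(g j)) := by
    induction j with
    | zero => rw [hε0, min_self]; exact hbar 0
    | succ n ih =>
      have hb : 2 * γ * min (ε n) (1 / 5 * √(g n)) ≤ 1 :=
        le_trans (by gcongr; exact (min_le_right _ _).trans (by gcongr; exact hsqrt n)) hγs
      exact le_min (comparison_step hγ.le hc.le hcγ.le (sq_nonneg _) (theta_sq_le_one jm n)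
        (hg n).le (hgg n).1 ih hb (hε n)) (hbar (n + 1))
  exact (key j).trans (min_le_left _ _)

theorem stmt12 (γ β₁ β₂ : ℝ) (hγ : 0 < γ) (hβ₁ : 0 < β₁) (hβ : β₁ ≤ β₂) :
    ∃ c gs : ℝ, 0 < c ∧ 0 < gs ∧
      ∀ (jm : ℕ) (g ε : ℕ → ℝ),
        (∀ j, 0 < g j) → g 0 ≤ gs →
        (∀ j, β₁ * theta jm j ^ 2 * g j ^ 2 ≤ g j - g (j + 1) ∧
              g j - g (j + 1) ≤ β₂ * theta jm j ^ 2 * g j ^ 2) →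
        ε 0 = (1 / 5) * Real.sqrt (g 0) →
        (∀ j, min (ε j) ((1 / 5) * Real.sqrt (g j)) -
              γ * theta jm j ^ 2 * (min (ε j) ((1 / 5) * Real.sqrt (g j))) ^ 2
            ≤ ε (j + 1)) →
        ∀ j, c * g j ≤ ε j :=
  stmt12_general γ β₁ β₂ hγ hβ₁
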